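/- Let S be a set of vertices not containing r, and let v ∈ S have minimal distance bound d_bou(v,S) among all vertices of S, where d_bou(v,S) = min over neighbors w of v in G' with w ∉ S of d_{G'}(r,w) + 1. Then the landmark distance from r to v in G' equals the landmark distance bound: d^L_{G'}(r,v) = d^L_bou(v,S) = min over neighbors w ∉ S of d^L_{G'}(r,w) ⊕ v. -/

import Mathlib

open scoped Classical

variable {V : Type*}

namespace BatchHL

/-- `l` is a walk in `G` from `r` to `v`, given as its (nonempty) list of visited vertices. -/
def IsWalk (G : SimpleGraph V) (r v : V) (l : List V) : Prop :=
  l ≠ [] ∧ l.head? = some r ∧ l.getLast? = some v ∧ l.Chain' G.Adj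

/-- The length (number of edges) of a walk given as a list of vertices. -/
def len (l : List V) : ℕ := l.length - 1

/-- The walk `l` passes through the (undirected) edge `(a, b)`. -/
def Passes (l : List V) (a b : V) : Prop :=
  (a, b) ∈ l.zip l.tail ∨ (b, a) ∈ l.zip l.tail

/-- `P_G(r,v)`: the set of all shortest paths between `r` and `v` in `G`. -/
def SPaths (G : SimpleGraph V) (r v : V) : Set (List V) :=
  {l | IsWalk G r v l ∧ ∀ l', IsWalk G r v l' → l.length ≤ l'.length}

/-- `(a,b)` is an edge deleted by the batch update turning `G` into `G'`. -/
def DeletedEdge (G G' : SimpleGraph V) (a b : V) : Prop := G.Adj a b ∧ ¬ G'.Adj a b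

/-- `(a,b)` is an edge inserted by the batch update turning `G` into `G'`. -/
def InsertedEdge (G G' : SimpleGraph V) (a b : V) : Prop := G'.Adj a b ∧ ¬ G.Adj a b

/-- `(a,b)` is an edge of the batch update `B` turning `G` into `G'`. -/
def UpdatedEdge (G G' : SimpleGraph V) (a b : V) : Prop :=
  InsertedEdge G G' a b ∨ DeletedEdge G G' a b

/-- The walk `l` passes through a deleted edge. -/
def PassesDeleted (G G' : SimpleGraph V) (l : List V) : Prop :=
  ∃ a b, DeletedEdge G G' a b ∧ Passes l a b

/-- The walk `l` passes through an inserted edge. -/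
def PassesInserted (G G' : SimpleGraph V) (l : List V) : Prop :=
  ∃ a b, InsertedEdge G G' a b ∧ Passes l a b

/-- `v` is affected w.r.t. landmark `r` iff the set of shortest paths changes. -/
def Affected (G G' : SimpleGraph V) (r v : V) : Prop := SPaths G r v ≠ SPaths G' r v

/-- A composite path from `r` to `v`: a prefix lying in `G` followed by a suffix lying in `G'`. -/
def IsComposite (G G' : SimpleGraph V) (r v : V) (l : List V) : Prop :=
  ∃ w l₁ l₂, IsWalk G r w l₁ ∧ IsWalk G' w v l₂ ∧ l = l₁ ++ l₂.tail

/-- A significant composite path: a composite path whose `G`-prefix passes through a deleted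
edge and whose `G'`-suffix passes through an inserted edge. -/
def IsSigComposite (G G' : SimpleGraph V) (r v : V) (l : List V) : Prop :=
  ∃ w l₁ l₂, IsWalk G r w l₁ ∧ IsWalk G' w v l₂ ∧ l = l₁ ++ l₂.tail ∧
    PassesDeleted G G' l₁ ∧ PassesInserted G G' l₂

/-- `v` is composite-path affected w.r.t. `r`. -/
def CPAffected (G G' : SimpleGraph V) (r v : V) : Prop :=
  Affected G G' r v ∨ ∃ l, IsSigComposite G G' r v l ∧ (len l : ℕ∞) ≤ G.edist r v

/-- A distance labelling: each label entry `(r, δ) ∈ L v` satisfies `δ = d_G(r,v)`. -/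
def IsLabelling (G : SimpleGraph V) (L : V → Set (V × ℕ∞)) : Prop :=
  ∀ v r δ, (r, δ) ∈ L v → δ = G.edist r v

/-- A 2-hop cover labelling: a distance labelling such that every pair `s, t` has a common
hub `r` lying on a shortest path between `s` and `t`. -/
def Is2HopCover (G : SimpleGraph V) (L : V → Set (V × ℕ∞)) : Prop :=
  IsLabelling G L ∧ ∀ s t : V, ∃ r, (r, G.edist r s) ∈ L s ∧ (r, G.edist r t) ∈ L t ∧
    G.edist s r + G.edist r t = G.edist s t

/-- A highway cover labelling `Γ = (H, L)` over `G` with landmarks `R`.  The highway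
distances `δ_H(r,r_i)` are by definition the graph distances `d_G(r,r_i)`. -/
def IsHighwayCover (G : SimpleGraph V) (R : Set V) (L : V → Set (V × ℕ∞)) : Prop :=
  (∀ v r δ, (r, δ) ∈ L v → r ∈ R ∧ δ = G.edist r v) ∧
  ∀ v, v ∉ R → ∀ r ∈ R,
    G.edist r v = sInf {x | ∃ ri δ, (ri, δ) ∈ L v ∧ x = δ + G.edist r ri}

/-- The landmark length / landmark distance values: `⊤` for "no path", otherwise a pair of a
length and a landmark flag (a `Prop`). -/
abbrev LLen := WithTop (ℕ × Prop)

/-- Lexicographic order on landmark lengths, with flag ordering `True < False`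
(i.e. `x ≤ y` at equal length iff `y`'s flag implies `x`'s flag). -/
def llLe : LLen → LLen → Prop
  | _, none => True
  | none, some _ => False
  | some a, some b => a.1 < b.1 ∨ (a.1 = b.1 ∧ (b.2 → a.2))

/-- Strict lexicographic order on landmark lengths. -/
def llLt (x y : LLen) : Prop := llLe x y ∧ ¬ llLe y x

/-- The extension operator `⊕`: `(d,l) ⊕ w = (d+1, True)` if `w ∈ R∖{r}`, else `(d+1, l)`. -/
def oplus (R : Set V) (r : V) : LLen → V → LLen
  | none, _ => none
  | some a, w => some (a.1 + 1, (w ∈ R ∧ w ≠ r) ∨ a.2)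

/-- The landmark length `lml(l)` of a walk `l` starting at `r`: its length together with the
flag recording whether it passes through a landmark other than `r`. -/
def lmLen (R : Set V) (r : V) (l : List V) : LLen :=
  some (len l, ∃ w ∈ l, w ∈ R ∧ w ≠ r)

/-- The landmark distance `d^L_G(r,v)`: the lexicographically minimal landmark length of a
walk from `r` to `v` (with `True < False` on flags), `⊤` if there is none.  Explicitly, its
length component is the minimal walk length and its flag holds iff some walk of minimal
length passes through a landmark other than `r`. -/
noncomputable def lmDist (G : SimpleGraph V) (R : Set V) (r v : V) : LLen :=
  if ∃ l, IsWalk G r v l then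
    some (sInf {n | ∃ l, IsWalk G r v l ∧ len l = n},
      ∃ l, IsWalk G r v l ∧ len l = sInf {n | ∃ l', IsWalk G r v l' ∧ len l' = n} ∧
        ∃ w ∈ l, w ∈ R ∧ w ≠ r)
  else ⊤

/-- Order on extended landmark lengths `(landmark length, deletion flag)`, lexicographic with
`True < False` on the deletion flag. -/
def ellLe (x y : LLen × Prop) : Prop := llLt x.1 y.1 ∨ (x.1 = y.1 ∧ (y.2 → x.2))

/-- Strict order on extended landmark lengths. -/
def ellLt (x y : LLen × Prop) : Prop := ellLe x y ∧ ¬ ellLe y x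

/-- `β(r,v) = (d^L_G(r,v), True)`. -/
noncomputable def beta (G : SimpleGraph V) (R : Set V) (r v : V) : LLen × Prop :=
  (lmDist G R r v, True)

/-- The distance bound `d_bou(u, S)` of `u` w.r.t. `S` in `G'`. -/
noncomputable def dbou (G' : SimpleGraph V) (r : V) (S : Set V) (u : V) : ℕ∞ :=
  ⨅ (w : V) (_ : G'.Adj u w ∧ w ∉ S), (G'.edist r w + 1)

/-- The set `{ d^L_{G'}(r,w) ⊕ v | w ∈ N_{G'}(v) ∖ S }`, whose lexicographic minimum is the
landmark distance bound `d^L_bou(v,S)`. -/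
noncomputable def lmBouSet (G' : SimpleGraph V) (R : Set V) (r v : V) (S : Set V) :
    Set LLen :=
  {x | ∃ w, G'.Adj v w ∧ w ∉ S ∧ x = oplus R r (lmDist G' R r w) v}

/-- The subgraph `G[V ∖ R]` obtained by removing all landmarks (landmarks become isolated). -/
def removeLandmarks (G : SimpleGraph V) (R : Set V) : SimpleGraph V where
  Adj u w := G.Adj u w ∧ u ∉ R ∧ w ∉ R
  symm := ⟨fun u w ⟨h, hu, hw⟩ => ⟨h.symm, hw, hu⟩⟩
  loopless := ⟨fun u ⟨h, _, _⟩ => G.loopless.irrefl u h⟩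

/-! The landmark distance is the lexicographic minimum of `lmLen` over walks, so it satisfies
the Bellman inequality `d^L(r,v) ≤ d^L(r,w) ⊕ v` for every neighbour `w` of `v`, with equality
when `w` is the predecessor of `v` on an optimal walk; that `w` is closer to `r` than `v`. It lies
outside `S`: otherwise the walk to `w` enters `S` at some `x` with
`d_bou(x,S) ≤ d(r,w) < d(r,v) ≤ d_bou(v,S)`, contradicting the minimality of `v`. -/

section Walks

variable {G : SimpleGraph V} {r v w : V} {l : List V}

lemma len_concat (l : List V) (v : V) (hl : l ≠ []) : len (l ++ [v]) = len l + 1 := by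
  have := List.length_pos_iff.mpr hl
  simp only [len, List.length_append, List.length_singleton]
  omega

lemma IsWalk.concat (h : IsWalk G r w l) (hadj : G.Adj w v) : IsWalk G r v (l ++ [v]) := by
  obtain ⟨hne, hh, hl, hc⟩ := h
  refine ⟨by simp, by rwa [List.head?_append_of_ne_nil _ hne], by simp, ?_⟩
  refine List.isChain_append.mpr ⟨hc, List.isChain_singleton _, ?_⟩
  rintro x hx y hy
  obtain rfl : x = w := Option.some.inj (hx.symm.trans hl)
  obtain rfl : y = v := (Option.some.inj hy).symm
  exact hadj

lemma IsWalk.exists_eq_concat (h : IsWalk G r v l) (hvr : v ≠ r) :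
    ∃ w l', IsWalk G r w l' ∧ G.Adj w v ∧ l = l' ++ [v] := by
  obtain ⟨hne, hh, hl, hc⟩ := h
  rcases l.eq_nil_or_concat' with rfl | ⟨l', b, rfl⟩
  · exact absurd rfl hne
  obtain rfl : b = v := by simpa using hl
  rcases eq_or_ne l' [] with rfl | hl'
  · exact absurd (by simpa using hh) hvr
  obtain ⟨hc', -, hlast⟩ := List.isChain_append.mp hc
  have hget : l'.getLast? = some (l'.getLast hl') := List.getLast?_eq_getLast_of_ne_nil hl'
  refine ⟨l'.getLast hl', l', ⟨hl', ?_, hget, hc'⟩, hlast _ hget _ rfl, rfl⟩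
  rwa [List.head?_append_of_ne_nil _ hl'] at hh

lemma isWalk_support (p : G.Walk r v) : IsWalk G r v p.support := by
  refine ⟨p.support_ne_nil, by cases p <;> rfl, ?_, p.isChain_adj_support⟩
  rw [List.getLast?_eq_getLast_of_ne_nil p.support_ne_nil, p.getLast_support]

lemma len_support (p : G.Walk r v) : len p.support = p.length := by
  simp [len, SimpleGraph.Walk.length_support]

lemma IsWalk.exists_walk_length_eq (h : IsWalk G r v l) :
    ∃ p : G.Walk r v, p.length = len l := by
  induction l generalizing r with
  | nil => exact absurd rfl h.1
  | cons a t ih =>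
    obtain ⟨-, hh, hl, hc⟩ := h
    obtain rfl : a = r := by simpa using hh
    cases t with
    | nil =>
      obtain rfl : v = a := by simpa using hl.symm
      exact ⟨.nil, rfl⟩
    | cons b t =>
      obtain ⟨hadj, hc'⟩ := List.isChain_cons_cons.mp hc
      obtain ⟨p, hp⟩ := ih ⟨List.cons_ne_nil _ _, rfl, by simpa using hl, hc'⟩
      exact ⟨.cons hadj p, by simp [hp, len]⟩

lemma IsWalk.edist_le_len (h : IsWalk G r v l) : G.edist r v ≤ len l := by
  obtain ⟨p, hp⟩ := h.exists_walk_length_eq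
  exact hp ▸ p.edist_le

end Walks

section LandmarkLength

variable {R : Set V} {r v : V} {x y : LLen}

lemma llLe_top (x : LLen) : llLe x ⊤ := by
  cases x <;> trivial

lemma llLe_antisymm (hxy : llLe x y) (hyx : llLe y x) : x = y := by
  match x, y, hxy, hyx with
  | none, none, _, _ => rfl
  | some a, some b, hab, hba =>
    obtain ⟨a₁, a₂⟩ := a
    obtain ⟨b₁, b₂⟩ := b
    simp only [llLe] at hab hba
    have h₁ : a₁ = b₁ := by omega
    subst h₁
    have h₂ : a₂ = b₂ := propext
      ⟨(hba.resolve_left (lt_irrefl _)).2, (hab.resolve_left (lt_irrefl _)).2⟩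
    rw [h₂]

lemma llLe.oplus (h : llLe x y) (w : V) : llLe (oplus R r x w) (oplus R r y w) := by
  match x, y, h with
  | _, none, _ => exact llLe_top _
  | some a, some b, hab =>
    simp only [BatchHL.oplus, llLe] at hab ⊢
    rcases hab with hlt | ⟨heq, himp⟩
    · exact .inl (by omega)
    · exact .inr ⟨by rw [heq], fun hb => hb.imp_right himp⟩

lemma oplus_lmLen (l : List V) (hl : l ≠ []) (v : V) :
    oplus R r (lmLen R r l) v = lmLen R r (l ++ [v]) := by
  simp only [BatchHL.oplus, lmLen, len_concat l v hl, List.mem_append, List.mem_cons,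
    List.not_mem_nil, or_comm, false_or, exists_eq_or_imp]
  rfl

end LandmarkLength

section LandmarkDistance

variable {G : SimpleGraph V} {R : Set V} {r v w : V} {l : List V}

lemma lmDist_of_isWalk (h : ∃ l, IsWalk G r v l) :
    lmDist G R r v = some (sInf {n | ∃ l, IsWalk G r v l ∧ len l = n},
      ∃ l, IsWalk G r v l ∧ len l = sInf {n | ∃ l', IsWalk G r v l' ∧ len l' = n} ∧
        ∃ w ∈ l, w ∈ R ∧ w ≠ r) :=
  if_pos h

lemma lmDist_of_not_isWalk (h : ¬ ∃ l, IsWalk G r v l) : lmDist G R r v = ⊤ :=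
  if_neg h

lemma lmDist_le_lmLen (hl : IsWalk G r v l) : llLe (lmDist G R r v) (lmLen R r l) := by
  rw [lmDist_of_isWalk ⟨l, hl⟩]
  have hmin : sInf {n | ∃ l, IsWalk G r v l ∧ len l = n} ≤ len l :=
    Nat.sInf_le ⟨l, hl, rfl⟩
  rcases hmin.lt_or_eq with hlt | heq
  · exact .inl hlt
  · exact .inr ⟨heq, fun hflag => ⟨l, hl, heq.symm, hflag⟩⟩

lemma exists_lmDist_eq_lmLen (h : ∃ l, IsWalk G r v l) :
    ∃ l, IsWalk G r v l ∧ lmDist G R r v = lmLen R r l := by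
  rw [lmDist_of_isWalk h]
  by_cases hflag : ∃ l, IsWalk G r v l ∧
      len l = sInf {n | ∃ l', IsWalk G r v l' ∧ len l' = n} ∧ ∃ w ∈ l, w ∈ R ∧ w ≠ r
  · obtain ⟨l, hl, hlen, hw⟩ := hflag
    refine ⟨l, hl, ?_⟩
    rw [lmLen, hlen]
    exact congrArg (fun P => some (_, P))
      (propext ⟨fun _ => hw, fun _ => ⟨l, hl, hlen, hw⟩⟩)
  · obtain ⟨l₀, hl₀⟩ := h
    obtain ⟨l, hl, hlen⟩ := Nat.sInf_mem (s := {n | ∃ l, IsWalk G r v l ∧ len l = n})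
      ⟨len l₀, l₀, hl₀, rfl⟩
    refine ⟨l, hl, ?_⟩
    rw [lmLen, hlen]
    exact congrArg (fun P => some (_, P))
      (propext ⟨fun hf => absurd hf hflag, fun hw => absurd ⟨l, hl, hlen, hw⟩ hflag⟩)

lemma IsWalk.len_eq_edist_of_lmDist_eq (hl : IsWalk G r v l)
    (hmin : lmDist G R r v = lmLen R r l) : (len l : ℕ∞) = G.edist r v := by
  refine le_antisymm ?_ hl.edist_le_len
  obtain ⟨p, hp⟩ := hl.exists_walk_length_eq
  have hreach : G.Reachable r v := ⟨p⟩
  obtain ⟨q, hq⟩ := hreach.exists_walk_length_eq_edist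
  have hle := hmin ▸ lmDist_le_lmLen (R := R) (isWalk_support q)
  simp only [lmLen, llLe, len_support] at hle
  rw [← hq]
  exact_mod_cast hle.elim le_of_lt fun h => h.1.le

lemma llLe_lmDist_oplus (hadj : G.Adj w v) :
    llLe (lmDist G R r v) (oplus R r (lmDist G R r w) v) := by
  by_cases hw : ∃ l, IsWalk G r w l
  · obtain ⟨l, hl, heq⟩ := exists_lmDist_eq_lmLen (R := R) hw
    rw [heq, oplus_lmLen l hl.1]
    exact lmDist_le_lmLen (hl.concat hadj)
  · rw [lmDist_of_not_isWalk hw]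
    exact llLe_top _

lemma exists_adj_lmDist_eq_oplus (h : ∃ l, IsWalk G r v l) (hvr : v ≠ r) :
    ∃ w, G.Adj w v ∧ G.edist r w < G.edist r v ∧
      lmDist G R r v = oplus R r (lmDist G R r w) v := by
  obtain ⟨l, hl, hmin⟩ := exists_lmDist_eq_lmLen (R := R) h
  obtain ⟨w, l', hl', hadj, rfl⟩ := hl.exists_eq_concat hvr
  have hlen := hl.len_eq_edist_of_lmDist_eq hmin
  rw [len_concat l' v hl'.1] at hlen
  refine ⟨w, hadj, ?_, llLe_antisymm (llLe_lmDist_oplus hadj) ?_⟩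
  · calc G.edist r w ≤ len l' := hl'.edist_le_len
      _ < G.edist r v := by rw [← hlen]; exact_mod_cast Nat.lt_succ_self _
  · rw [hmin, ← oplus_lmLen l' hl'.1]
    exact (lmDist_le_lmLen hl').oplus v

end LandmarkDistance

section DistanceBound

variable {G : SimpleGraph V} {r u v w : V} {S : Set V}

lemma edist_le_dbou : G.edist r v ≤ dbou G r S v :=
  le_iInf₂ fun w hw => calc
    G.edist r v ≤ G.edist r w + G.edist w v := SimpleGraph.edist_triangle
    _ = G.edist r w + 1 := by rw [SimpleGraph.edist_eq_one_iff_adj.mpr hw.1.symm]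

/-- Take the vertex where the walk last enters `S`: its predecessor lies outside `S`. -/
lemma exists_mem_dbou_le_length (hrS : r ∉ S) (p : G.Walk r u) (hu : u ∈ S) :
    ∃ x ∈ S, dbou G r S x ≤ p.length := by
  induction p using SimpleGraph.Walk.concatRec with
  | Hnil => exact absurd hu hrS
  | @Hconcat _ w u q hadj ih =>
    rw [SimpleGraph.Walk.length_concat, Nat.cast_succ]
    by_cases hw : w ∈ S
    · obtain ⟨x, hxS, hx⟩ := ih hrS hw
      exact ⟨x, hxS, hx.trans (by simp)⟩
    · refine ⟨u, hu, (iInf₂_le w ⟨hadj.symm, hw⟩).trans ?_⟩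
      gcongr
      exact q.edist_le

lemma exists_mem_dbou_le_edist (hrS : r ∉ S) (hu : u ∈ S) :
    ∃ x ∈ S, dbou G r S x ≤ G.edist r u := by
  by_cases hreach : G.Reachable r u
  · obtain ⟨p, hp⟩ := hreach.exists_walk_length_eq_edist
    exact hp ▸ exists_mem_dbou_le_length hrS p hu
  · exact ⟨u, hu, by simp [SimpleGraph.edist_eq_top_of_not_reachable hreach]⟩

lemma notMem_of_edist_lt_of_dbou_minimal (hrS : r ∉ S)
    (hmin : ∀ u ∈ S, dbou G r S v ≤ dbou G r S u) (hw : G.edist r w < G.edist r v) :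
    w ∉ S := by
  intro hwS
  obtain ⟨x, hxS, hx⟩ := exists_mem_dbou_le_edist hrS hwS
  exact lt_irrefl _ <| calc
    dbou G r S v ≤ dbou G r S x := hmin x hxS
    _ ≤ G.edist r w := hx
    _ < G.edist r v := hw
    _ ≤ dbou G r S v := edist_le_dbou

end DistanceBound

theorem boundary_vertex_lemma_general (G' : SimpleGraph V) (R : Set V) (r : V)
    (S : Set V) (hrS : r ∉ S) (v : V) (hv : v ∈ S)
    (hmin : ∀ u ∈ S, dbou G' r S v ≤ dbou G' r S u) :
    lmDist G' R r v ∈ insert (⊤ : LLen) (lmBouSet G' R r v S) ∧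
    ∀ x ∈ lmBouSet G' R r v S, llLe (lmDist G' R r v) x := by
  refine ⟨?_, fun x ⟨w, hadj, _, hx⟩ => hx ▸ llLe_lmDist_oplus hadj.symm⟩
  by_cases hwalk : ∃ l, IsWalk G' r v l
  · have hvr : v ≠ r := fun h => hrS (h ▸ hv)
    obtain ⟨w, hadj, hlt, heq⟩ := exists_adj_lmDist_eq_oplus (R := R) hwalk hvr
    exact .inr ⟨w, hadj.symm, notMem_of_edist_lt_of_dbou_minimal hrS hmin hlt, heq⟩
  · exact .inl (lmDist_of_not_isWalk hwalk)

/-- **Lemma 8.** Let `S ⊆ V∖{r}` and let `v ∈ S` have minimal distance bound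
`d_bou(v,S)` among all vertices of `S`.  Then the landmark distance from `r` to `v` in `G'`
equals the landmark distance bound `d^L_bou(v,S)`, i.e. it is the lexicographic minimum of
`{ d^L_{G'}(r,w) ⊕ v | w ∈ N_{G'}(v) ∖ S }` (`⊤` if this set is empty). -/
theorem boundary_vertex_lemma (G' : SimpleGraph V) (R : Set V) (r : V) (hrR : r ∈ R)
    (S : Set V) (hrS : r ∉ S) (v : V) (hv : v ∈ S)
    (hmin : ∀ u ∈ S, dbou G' r S v ≤ dbou G' r S u) :
    lmDist G' R r v ∈ insert (⊤ : LLen) (lmBouSet G' R r v S) ∧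
    ∀ x ∈ lmBouSet G' R r v S, llLe (lmDist G' R r v) x :=
  boundary_vertex_lemma_general G' R r S hrS v hv hmin

end BatchHL
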